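/- arXiv:2401.14231 — 5 statements merged into one kernel-verified Lean document; each statement's English description precedes it below -/
import Mathlib

section
/- Let k ≥ 2 and let f : ℕ → ℝ be a k-automatic sequence, that is, f is generated by a k-DFAO (Q, δ, q₀, τ) with real-valued output function τ : Q → ℝ, reading base-k digits least-significant-digit first. Then f is strongly k-recursive: there exist natural numbers r < t such that for every b with 0 ≤ b < k^t there exist real coefficients c_a (0 ≤ a < k^r) with f(k^t·n + b) = Σ_{0 ≤ a < k^r} c_a·f(k^r·n + a) for all n ≥ 0. -/
/-!
For `a < k ^ r` and `n > 0`, the base-`k` expansion of `k ^ r * n + a` is that of `a`, padded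
with zeros to length `r`, followed by that of `n`. Hence the subsequence `f (k ^ r * n + a)` is
determined by the state reached after reading the padded digits of `a` (for `n > 0`) together
with the state reached after reading the digits of `a` itself (for `n = 0`). For each `r` the
set of these pairs of states, over all `a < k ^ r`, is a subset of the finite set `Q × Q`, so by
pigeonhole two levels `r < t` have the same set. Then every subsequence at level `t` coincides
with a subsequence at level `r`, which is a (trivial) linear combination of them.
-/

/-- Extended transition function of a DFAO, reading the word left to right
(least-significant digit first): `dstar δ q [] = q` and
`dstar δ q (d :: w) = dstar δ (δ q d) w`. -/
def dstar {Q D : Type*} (δ : Q → D → Q) : Q → List D → Q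
  | q, [] => q
  | q, d :: w => dstar δ (δ q d) w

section

variable {Q D : Type*}

lemma dstar_append (δ : Q → D → Q) (q : Q) (l₁ l₂ : List D) :
    dstar δ q (l₁ ++ l₂) = dstar δ (dstar δ q l₁) l₂ := by
  induction l₁ generalizing q with
  | nil => rfl
  | cons d w ih => exact ih (δ q d)

def Nat.paddedDigits (k r a : ℕ) : List ℕ :=
  Nat.digits k a ++ List.replicate (r - (Nat.digits k a).length) 0

lemma Nat.digits_pow_mul_add {k r a n : ℕ} (hk : 1 < k) (ha : a < k ^ r) (hn : 0 < n) :
    Nat.digits k (k ^ r * n + a) = Nat.paddedDigits k r a ++ Nat.digits k n := by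
  rw [Nat.paddedDigits, Nat.digits_append_zeroes_append_digits hk hn,
    Nat.add_sub_cancel' ((Nat.digits_length_le_iff hk a).2 ha), add_comm]

def residueState (k : ℕ) (δ : Q → ℕ → Q) (q₀ : Q) (r a : ℕ) : Q × Q :=
  (dstar δ q₀ (Nat.paddedDigits k r a), dstar δ q₀ (Nat.digits k a))

lemma apply_pow_mul_add_eq_of_residueState_eq {k : ℕ} {δ : Q → ℕ → Q} {q₀ : Q} {τ : Q → ℝ}
    {f : ℕ → ℝ} (hk : 1 < k) (hf : ∀ n, f n = τ (dstar δ q₀ (Nat.digits k n)))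
    {r a r' a' : ℕ} (ha : a < k ^ r) (ha' : a' < k ^ r')
    (h : residueState k δ q₀ r a = residueState k δ q₀ r' a') (n : ℕ) :
    f (k ^ r * n + a) = f (k ^ r' * n + a') := by
  obtain ⟨hpadded, hdigits⟩ := Prod.mk.inj h
  rcases Nat.eq_zero_or_pos n with rfl | hn
  · simp only [mul_zero, zero_add, hf, hdigits]
  · rw [hf, hf, Nat.digits_pow_mul_add hk ha hn, Nat.digits_pow_mul_add hk ha' hn,
      dstar_append, dstar_append, hpadded]

lemma exists_lt_image_residueState_eq [Finite Q] (k : ℕ) (δ : Q → ℕ → Q) (q₀ : Q) :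
    ∃ r t, r < t ∧
      residueState k δ q₀ r '' Set.Iio (k ^ r) = residueState k δ q₀ t '' Set.Iio (k ^ t) :=
  Set.finite_univ.exists_lt_map_eq_of_forall_mem (fun _ ↦ Set.mem_univ _)

end

theorem stmt_10 (k : ℕ) (hk : 2 ≤ k) {Q : Type*} [Fintype Q]
    (δ : Q → Fin k → Q) (q₀ : Q) (τ : Q → ℝ) (f : ℕ → ℝ)
    (hf : ∀ n : ℕ, f n =
      τ (dstar (fun (q : Q) (d : ℕ) => δ q ⟨d % k, Nat.mod_lt d (by omega)⟩)
          q₀ (Nat.digits k n))) :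
    ∃ r t : ℕ, r < t ∧ ∀ b < k ^ t, ∃ c : ℕ → ℝ,
      ∀ n : ℕ, f (k ^ t * n + b) =
        ∑ a ∈ Finset.range (k ^ r), c a * f (k ^ r * n + a) := by
  set δ' : Q → ℕ → Q := fun q d ↦ δ q ⟨d % k, Nat.mod_lt d (by omega)⟩
  obtain ⟨r, t, hrt, himage⟩ := exists_lt_image_residueState_eq k δ' q₀
  refine ⟨r, t, hrt, fun b hb ↦ ?_⟩
  obtain ⟨a, ha, hab⟩ : residueState k δ' q₀ t b ∈ residueState k δ' q₀ r '' Set.Iio (k ^ r) :=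
    himage ▸ Set.mem_image_of_mem _ hb
  refine ⟨fun x ↦ if x = a then 1 else 0, fun n ↦ ?_⟩
  rw [apply_pow_mul_add_eq_of_residueState_eq (by omega) hf hb ha hab.symm n]
  simp [Set.mem_Iio.mp ha]
end

section
/- For all natural numbers t ≥ 0, n ≥ 0, and all b with 0 ≤ b < 3^t: if n is even then h(3^t·n + b) = h(n) + h(b), and if n is odd then h(3^t·n + b) = h(n) + t − h(b) (as an identity of integers; in particular h(b) ≤ t for 0 ≤ b < 3^t). -/
/-- `h 0 = 0`; for `n > 0`, `h n = h (n / 9) + 1` if `n ≡ 1 (mod 3)`,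
and `h n = h (n / 3) + (n / 3) % 2` otherwise. -/
def h : ℕ → ℕ
  | 0 => 0
  | (n + 1) =>
    if (n + 1) % 3 = 1 then h ((n + 1) / 9) + 1
    else h ((n + 1) / 3) + ((n + 1) / 3) % 2
  decreasing_by
  · exact Nat.div_lt_self (Nat.succ_pos n) (by norm_num)
  · exact Nat.div_lt_self (Nat.succ_pos n) (by norm_num)

lemma h_pos (n : ℕ) (hn : 0 < n) :
    h n = if n % 3 = 1 then h (n / 9) + 1 else h (n / 3) + (n / 3) % 2 := by
  cases n with
  | zero => omega
  | succ m => rw [h]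

lemma h3 (m : ℕ) : h (3 * m) = h m + m % 2 := by
  rcases Nat.eq_zero_or_pos m with rfl | hm
  · simp [h]
  · rw [h_pos (3 * m) (by omega), if_neg (by omega)]
    have e : 3 * m / 3 = m := by omega
    rw [e]

lemma h32 (m : ℕ) : h (3 * m + 2) = h m + m % 2 := by
  rw [h_pos (3 * m + 2) (by omega), if_neg (by omega)]
  have e : (3 * m + 2) / 3 = m := by omega
  rw [e]

lemma h31 (m : ℕ) : h (3 * m + 1) = h (m / 3) + 1 := by
  rw [h_pos (3 * m + 1) (by omega), if_pos (by omega)]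
  have e : (3 * m + 1) / 9 = m / 3 := by omega
  rw [e]

lemma hL (n : ℕ) : h n = h (n / 3) + n % 2 := by
  induction n using Nat.strong_induction_on with
  | _ n ih =>
    rcases Nat.eq_zero_or_pos n with rfl | hn
    · simp [h]
    rcases eq_or_ne (n % 3) 1 with h1 | h1
    · rw [h_pos n hn, if_pos h1]
      have hlt : n / 3 < n := Nat.div_lt_self hn (by omega)
      have := ih (n / 3) hlt
      have e9 : n / 9 = n / 3 / 3 := by omega
      rw [e9]
      omega
    · rw [h_pos n hn, if_neg h1]
      have : n / 3 % 2 = n % 2 := by omega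
      omega

theorem stmt_12 (t n b : ℕ) (hb : b < 3 ^ t) :
    (Even n → h (3 ^ t * n + b) = h n + h b) ∧
    (Odd n → (h (3 ^ t * n + b) : ℤ) = (h n : ℤ) + t - h b) ∧
    h b ≤ t := by
  induction t generalizing b with
  | zero =>
    interval_cases b
    simp [h]
  | succ t ih =>
    have hpow : (3:ℕ) ^ (t + 1) = 3 * 3 ^ t := by rw [pow_succ]; ring
    have hb' : b / 3 < 3 ^ t := by omega
    obtain ⟨hE, hO, hle⟩ := ih (b / 3) hb'
    set b' := b / 3 with hb'def
    set M := 3 ^ t * n + b' with hMdef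
    have key : 3 ^ (t + 1) * n + b = 3 * M + b % 3 := by
      rw [hpow, hMdef, mul_assoc]
      omega
    have hk : (3:ℕ) ^ t % 2 = 1 := by
      rw [Nat.pow_mod]; norm_num
    have hkn : (3 ^ t * n) % 2 = n % 2 := by
      rw [Nat.mul_mod, hk, one_mul]
      omega
    have hM2 : M % 2 = (n + b') % 2 := by omega
    have hr : b % 3 = 0 ∨ b % 3 = 1 ∨ b % 3 = 2 := by omega
    rcases hr with hr | hr | hr
    · -- b = 3 * b'
      have e1 : h (3 ^ (t + 1) * n + b) = h M + M % 2 := by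
        rw [key, hr, Nat.add_zero, h3]
      have eb : b = 3 * b' := by omega
      have e2 : h b = h b' + b' % 2 := by rw [eb, h3]
      refine ⟨fun hn => ?_, fun hn => ?_, by omega⟩
      · have := hE hn
        rw [Nat.even_iff] at hn
        omega
      · have := hO hn
        rw [Nat.odd_iff] at hn
        omega
    · -- b = 3 * b' + 1
      have e1 : h (3 ^ (t + 1) * n + b) = h (M / 3) + 1 := by
        rw [key, hr, h31]
      have eL : h M = h (M / 3) + M % 2 := hL M
      have eb : b = 3 * b' + 1 := by omega
      have e2 : h b = h (b' / 3) + 1 := by rw [eb, h31]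
      have eL' : h b' = h (b' / 3) + b' % 2 := hL b'
      refine ⟨fun hn => ?_, fun hn => ?_, by omega⟩
      · have := hE hn
        rw [Nat.even_iff] at hn
        omega
      · have := hO hn
        rw [Nat.odd_iff] at hn
        omega
    · -- b = 3 * b' + 2
      have e1 : h (3 ^ (t + 1) * n + b) = h M + M % 2 := by
        rw [key, hr, h32]
      have eb : b = 3 * b' + 2 := by omega
      have e2 : h b = h b' + b' % 2 := by rw [eb, h32]
      refine ⟨fun hn => ?_, fun hn => ?_, by omega⟩
      · have := hE hn
        rw [Nat.even_iff] at hn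
        omega
      · have := hO hn
        rw [Nat.odd_iff] at hn
        omega
end

section
/- For all natural numbers n ≥ 0 the following identities of integers hold: h(9n) = h(9n+6) = −h(n) + 2·h(3n); h(9n+1) = h(9n+4) = h(9n+7) = h(n) + 1 = −h(n) + h(3n) + h(3n+1); h(9n+3) = −h(n) + 2·h(3n+1); and h(3n+2) = h(n) + (n mod 2). -/
/-! Every identity follows from the closed forms `h (3n) = h (3n+2) = h n + n % 2`,
`h (3n+1) = h n + (n+1) % 2` and `h (9n+r) = h n + 1` for `r ≡ 1 (mod 3)`; only the
formula for `h (3n+1)` needs an induction, through `3n+1 = 9(n/3) + 3(n % 3) + 1`. -/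

theorem h_of_mod_three_ne_one {n : ℕ} (hn : n % 3 ≠ 1) : h n = h (n / 3) + n / 3 % 2 := by
  cases n with
  | zero => rfl
  | succ n => rw [h, if_neg hn]

theorem h_of_mod_three_eq_one {n : ℕ} (hn : n % 3 = 1) : h n = h (n / 9) + 1 := by
  cases n with
  | zero => contradiction
  | succ n => rw [h, if_pos hn]

theorem h_three_mul (n : ℕ) : h (3 * n) = h n + n % 2 := by
  rw [h_of_mod_three_ne_one (by omega), Nat.mul_div_cancel_left n three_pos]

theorem h_three_mul_add_two (n : ℕ) : h (3 * n + 2) = h n + n % 2 := by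
  rw [h_of_mod_three_ne_one (by omega), show (3 * n + 2) / 3 = n by omega]

theorem h_nine_mul_add {n r : ℕ} (hr : r < 9) (hr₁ : r % 3 = 1) : h (9 * n + r) = h n + 1 := by
  rw [h_of_mod_three_eq_one (by omega), show (9 * n + r) / 9 = n by omega]

theorem h_three_mul_add_one (n : ℕ) : h (3 * n + 1) = h n + (n + 1) % 2 := by
  induction n using Nat.strong_induction_on with
  | _ n ih =>
    obtain ⟨m, r, hr, rfl⟩ : ∃ m r, r < 3 ∧ n = 3 * m + r :=
      ⟨n / 3, n % 3, Nat.mod_lt _ three_pos, (Nat.div_add_mod n 3).symm⟩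
    rw [show 3 * (3 * m + r) + 1 = 9 * m + (3 * r + 1) by ring,
      h_nine_mul_add (by omega) (by omega)]
    interval_cases r
    · simp only [add_zero, h_three_mul]; omega
    · rw [ih m (by omega)]; omega
    · rw [h_three_mul_add_two]; omega

theorem stmt_13 (n : ℕ) :
    (h (9 * n) : ℤ) = h (9 * n + 6) ∧
    (h (9 * n) : ℤ) = -(h n : ℤ) + 2 * h (3 * n) ∧
    (h (9 * n + 1) : ℤ) = h (9 * n + 4) ∧
    (h (9 * n + 1) : ℤ) = h (9 * n + 7) ∧
    (h (9 * n + 1) : ℤ) = (h n : ℤ) + 1 ∧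
    (h (9 * n + 1) : ℤ) = -(h n : ℤ) + h (3 * n) + h (3 * n + 1) ∧
    (h (9 * n + 3) : ℤ) = -(h n : ℤ) + 2 * h (3 * n + 1) ∧
    (h (3 * n + 2) : ℤ) = (h n : ℤ) + n % 2 := by
  have h0 : h (9 * n) = h (3 * n) + n % 2 := by
    rw [show 9 * n = 3 * (3 * n) by ring, h_three_mul]; omega
  have h6 : h (9 * n + 6) = h (3 * n + 2) + n % 2 := by
    rw [show 9 * n + 6 = 3 * (3 * n + 2) by ring, h_three_mul]; omega
  have h3 : h (9 * n + 3) = h (3 * n + 1) + (n + 1) % 2 := by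
    rw [show 9 * n + 3 = 3 * (3 * n + 1) by ring, h_three_mul]; omega
  have h1 := h_nine_mul_add (n := n) (r := 1) (by omega) rfl
  have h4 := h_nine_mul_add (n := n) (r := 4) (by omega) rfl
  have h7 := h_nine_mul_add (n := n) (r := 7) (by omega) rfl
  have := h_three_mul n
  have := h_three_mul_add_one n
  have := h_three_mul_add_two n
  omega
end

section
/- For all natural numbers n ≥ 0, the factor complexity of the Thue–Morse sequence satisfies f_t(16n+1) = 3·f_t(8n+2) − f_t(8n+4) (as an identity of integers). -/
/-!
Write positions as `2 * k + r` with `r < 2`. Since `tm (2 * a) = tm a` and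
`tm (2 * a + 1) = 1 - tm a`, the factor of length `N` at `2 * k + r` carries exactly the
information of the factor of length `(N + r + 1) / 2` at `k`. For `N ≥ 4` a factor also
determines the parity of its position, since `tm` has no three equal consecutive letters. Hence
`f (2 * m) = f m + f (m + 1)` and `f (2 * m + 1) = 2 * f (m + 1)` for `m ≥ 2`. With
`a = f (2 * n + 1)` and `b = f (2 * n + 2)` this gives `f (16 * n + 1) = 8 * a`,
`f (8 * n + 2) = 3 * a + b` and `f (8 * n + 4) = a + 3 * b` for `n ≥ 1`, while `n = 0` reduces to
`f 1 = 2`, `f 2 = 4` and `f 4 = f 2 + f 3 = 10`.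
-/

/-- The Thue–Morse sequence: `tm n` is the parity of the number of 1s in the
binary representation of `n`. -/
def tm (n : ℕ) : ℕ := (Nat.digits 2 n).sum % 2

/-- The factor complexity of the Thue–Morse sequence: the number of distinct
blocks of length `n` occurring in it. -/
noncomputable def tmComplexity (n : ℕ) : ℕ :=
  Set.ncard {w : Fin n → ℕ | ∃ i : ℕ, ∀ j : Fin n, w j = tm (i + j)}

theorem Set.ncard_range_eq_of_eq_iff {α β γ : Type*} {f : α → β} {g : α → γ}
    (h : ∀ a b, f a = f b ↔ g a = g b) : (Set.range f).ncard = (Set.range g).ncard := by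
  rw [← Nat.card_coe_set_eq, ← Nat.card_coe_set_eq]
  exact Nat.card_congr <| (Setoid.quotientKerEquivRange f).symm.trans <|
    (Quotient.congrRight h).trans (Setoid.quotientKerEquivRange g)

namespace ThueMorse

open Set

theorem tm_lt_two (n : ℕ) : tm n < 2 := Nat.mod_lt _ two_pos

theorem tm_two_mul (n : ℕ) : tm (2 * n) = tm n := by
  rcases Nat.eq_zero_or_pos n with rfl | hn
  · rfl
  · rw [tm, Nat.digits_def' one_lt_two (by omega)]
    simp [tm]

theorem tm_two_mul_add_one (n : ℕ) : tm (2 * n + 1) = 1 - tm n := by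
  rw [tm, Nat.digits_def' one_lt_two (by omega), show (2 * n + 1) / 2 = n by omega, tm,
    List.sum_cons]
  omega

theorem tm_two_mul_add_eq_iff {a a' r : ℕ} (hr : r < 2) :
    tm (2 * a + r) = tm (2 * a' + r) ↔ tm a = tm a' := by
  have := tm_lt_two a
  have := tm_lt_two a'
  interval_cases r
  · simp [tm_two_mul]
  · rw [tm_two_mul_add_one, tm_two_mul_add_one]
    omega

theorem not_tm_eq_and_tm_eq (i : ℕ) : ¬ (tm i = tm (i + 1) ∧ tm (i + 1) = tm (i + 2)) := by
  obtain ⟨k, rfl | rfl⟩ := Nat.even_or_odd' i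
  · rw [tm_two_mul, tm_two_mul_add_one]
    have := tm_lt_two k
    omega
  · rw [show 2 * k + 1 + 1 = 2 * (k + 1) by ring, show 2 * k + 1 + 2 = 2 * (k + 1) + 1 by ring,
      tm_two_mul, tm_two_mul_add_one (k + 1)]
    have := tm_lt_two (k + 1)
    omega

def tmFactor (N i : ℕ) : Fin N → ℕ := fun j => tm (i + j)

theorem tmComplexity_eq_ncard_range (N : ℕ) : tmComplexity N = (range (tmFactor N)).ncard := by
  unfold tmComplexity
  congr 1
  ext w
  simp only [mem_ofPred_eq, mem_range, funext_iff, tmFactor, eq_comm]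

theorem tmFactor_eq_tmFactor_iff {N i i' : ℕ} :
    tmFactor N i = tmFactor N i' ↔ ∀ j < N, tm (i + j) = tm (i' + j) := by
  simp [funext_iff, Fin.forall_iff, tmFactor]

theorem finite_range_tmFactor (N : ℕ) : (range (tmFactor N)).Finite := by
  refine (Finite.pi (t := fun _ => Iio 2) fun _ => finite_Iio 2).subset ?_
  rintro _ ⟨i, rfl⟩ j -
  exact tm_lt_two _

theorem range_tmFactor_eq_union (N : ℕ) :
    range (tmFactor N) =
      range (fun k => tmFactor N (2 * k)) ∪ range (fun k => tmFactor N (2 * k + 1)) := by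
  refine Subset.antisymm ?_ (union_subset (range_comp_subset_range (2 * ·) (tmFactor N))
    (range_comp_subset_range (2 * · + 1) (tmFactor N)))
  rintro _ ⟨i, rfl⟩
  obtain ⟨k, rfl | rfl⟩ := Nat.even_or_odd' i
  exacts [Or.inl ⟨k, rfl⟩, Or.inr ⟨k, rfl⟩]

/-- Equality would force `tm k' = tm (k' + 1) = tm (k' + 2)`. -/
theorem tmFactor_two_mul_ne {N : ℕ} (hN : 4 ≤ N) (k k' : ℕ) :
    tmFactor N (2 * k) ≠ tmFactor N (2 * k' + 1) := by
  intro h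
  have e := fun j hj => tmFactor_eq_tmFactor_iff.1 h j (lt_of_lt_of_le hj hN)
  have e0 : tm (2 * k) = tm (2 * k' + 1) := e 0 (by norm_num)
  have e1 : tm (2 * k + 1) = tm (2 * (k' + 1)) := e 1 (by norm_num)
  have e2 : tm (2 * (k + 1)) = tm (2 * (k' + 1) + 1) := e 2 (by norm_num)
  have e3 : tm (2 * (k + 1) + 1) = tm (2 * (k' + 2)) := e 3 (by norm_num)
  simp only [tm_two_mul, tm_two_mul_add_one] at e0 e1 e2 e3
  have := tm_lt_two k
  have := tm_lt_two (k + 1)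
  have := tm_lt_two k'
  exact not_tm_eq_and_tm_eq k' ⟨by omega, by omega⟩

theorem disjoint_range_tmFactor_two_mul {N : ℕ} (hN : 4 ≤ N) :
    Disjoint (range (fun k => tmFactor N (2 * k))) (range (fun k => tmFactor N (2 * k + 1))) := by
  rw [disjoint_left]
  rintro _ ⟨k, rfl⟩ ⟨k', h⟩
  exact tmFactor_two_mul_ne hN k k' h.symm

/-- A factor starting at `2 * k + r` is the image under `0 ↦ 01, 1 ↦ 10` of the factor of
length `(N + r + 1) / 2` starting at `k`, with the first `r` letters removed, and it still
sees every letter of that factor. -/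
theorem tmFactor_two_mul_add_eq_iff {N r : ℕ} (hN : 0 < N) (hr : r < 2) (k k' : ℕ) :
    tmFactor N (2 * k + r) = tmFactor N (2 * k' + r) ↔
      tmFactor ((N + r + 1) / 2) k = tmFactor ((N + r + 1) / 2) k' := by
  simp only [tmFactor_eq_tmFactor_iff]
  have split : ∀ a j, 2 * a + r + j = 2 * (a + (r + j) / 2) + (r + j) % 2 := by omega
  constructor
  · intro h s hs
    have := h (2 * s - r) (by omega)
    rwa [split, split, tm_two_mul_add_eq_iff (Nat.mod_lt _ two_pos),
      show (r + (2 * s - r)) / 2 = s by omega] at this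
  · intro h j hj
    rw [split, split, tm_two_mul_add_eq_iff (Nat.mod_lt _ two_pos)]
    exact h _ (by omega)

theorem ncard_range_tmFactor_two_mul_add {N r : ℕ} (hN : 0 < N) (hr : r < 2) :
    (range (fun k => tmFactor N (2 * k + r))).ncard = tmComplexity ((N + r + 1) / 2) := by
  rw [tmComplexity_eq_ncard_range]
  exact ncard_range_eq_of_eq_iff (tmFactor_two_mul_add_eq_iff hN hr)

theorem tmComplexity_eq_add {N : ℕ} (hN : 4 ≤ N) :
    tmComplexity N = tmComplexity ((N + 1) / 2) + tmComplexity ((N + 2) / 2) := by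
  have even := ncard_range_tmFactor_two_mul_add (r := 0) (by omega : 0 < N) two_pos
  have odd := ncard_range_tmFactor_two_mul_add (r := 1) (by omega : 0 < N) one_lt_two
  simp only [add_zero] at even
  rw [tmComplexity_eq_ncard_range, range_tmFactor_eq_union,
    ncard_union_eq (disjoint_range_tmFactor_two_mul hN)
      ((finite_range_tmFactor N).subset (range_comp_subset_range (2 * ·) (tmFactor N)))
      ((finite_range_tmFactor N).subset (range_comp_subset_range (2 * · + 1) (tmFactor N))),
    even, odd]

theorem tmComplexity_two_mul {m : ℕ} (hm : 2 ≤ m) :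
    tmComplexity (2 * m) = tmComplexity m + tmComplexity (m + 1) := by
  rw [tmComplexity_eq_add (by omega), show (2 * m + 1) / 2 = m by omega,
    show (2 * m + 2) / 2 = m + 1 by omega]

theorem tmComplexity_two_mul_add_one {m : ℕ} (hm : 2 ≤ m) :
    tmComplexity (2 * m + 1) = 2 * tmComplexity (m + 1) := by
  rw [tmComplexity_eq_add (by omega), show (2 * m + 1 + 1) / 2 = m + 1 by omega,
    show (2 * m + 1 + 2) / 2 = m + 1 by omega, two_mul]

theorem tmComplexity_eq_card {N : ℕ} (S : Finset (Fin N → ℕ)) (K : ℕ)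
    (hsub : ∀ i, tmFactor N i ∈ S) (hsup : ∀ w ∈ S, ∃ i < K, tmFactor N i = w) :
    tmComplexity N = S.card := by
  rw [tmComplexity_eq_ncard_range, ← ncard_coe_finset]
  congr 1
  refine Subset.antisymm (range_subset_iff.2 hsub) fun w hw => ?_
  obtain ⟨i, -, rfl⟩ := hsup w hw
  exact mem_range_self i

theorem tmComplexity_one : tmComplexity 1 = 2 := by
  refine tmComplexity_eq_card {![0], ![1]} 2 (fun i => ?_) (by decide)
  have key : ∀ a < 2, ![a] ∈ ({![0], ![1]} : Finset (Fin 1 → ℕ)) := by decide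
  convert key _ (tm_lt_two i) using 1
  funext j
  fin_cases j
  rfl

theorem tmComplexity_two : tmComplexity 2 = 4 := by
  refine tmComplexity_eq_card {![0, 0], ![0, 1], ![1, 0], ![1, 1]} 6 (fun i => ?_) (by decide)
  have key : ∀ a < 2, ∀ b < 2,
      ![a, b] ∈ ({![0, 0], ![0, 1], ![1, 0], ![1, 1]} : Finset (Fin 2 → ℕ)) := by decide
  convert key _ (tm_lt_two i) _ (tm_lt_two (i + 1)) using 1
  funext j
  fin_cases j <;> rfl

set_option synthInstance.maxSize 256 in
theorem tmComplexity_three : tmComplexity 3 = 6 := by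
  refine tmComplexity_eq_card {![0, 0, 1], ![0, 1, 0], ![0, 1, 1], ![1, 0, 0], ![1, 0, 1],
    ![1, 1, 0]} 6 (fun i => ?_) (by decide)
  have key : ∀ a < 2, ∀ b < 2, ∀ c < 2, ¬ (a = b ∧ b = c) → ![a, b, c] ∈
      ({![0, 0, 1], ![0, 1, 0], ![0, 1, 1], ![1, 0, 0], ![1, 0, 1], ![1, 1, 0]} :
        Finset (Fin 3 → ℕ)) := by decide
  convert key _ (tm_lt_two i) _ (tm_lt_two (i + 1)) _ (tm_lt_two (i + 2))
    (not_tm_eq_and_tm_eq i) using 1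
  funext j
  fin_cases j <;> rfl

end ThueMorse

open ThueMorse

theorem stmt_17 (n : ℕ) :
    (tmComplexity (16 * n + 1) : ℤ) =
      3 * tmComplexity (8 * n + 2) - tmComplexity (8 * n + 4) := by
  rcases Nat.eq_zero_or_pos n with rfl | hn
  · have h4 : tmComplexity 4 = tmComplexity 2 + tmComplexity 3 := tmComplexity_two_mul le_rfl
    norm_num [h4, tmComplexity_one, tmComplexity_two, tmComplexity_three]
  · have h1 := tmComplexity_two_mul_add_one (m := 8 * n) (by omega)
    have h2 := tmComplexity_two_mul_add_one (m := 4 * n) (by omega)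
    have h3 := tmComplexity_two_mul_add_one (m := 2 * n) (by omega)
    have h4 := tmComplexity_two_mul_add_one (m := 2 * n + 1) (by omega)
    have h5 := tmComplexity_two_mul (m := 4 * n + 1) (by omega)
    have h6 := tmComplexity_two_mul (m := 4 * n + 2) (by omega)
    have h7 := tmComplexity_two_mul (m := 2 * n + 1) (by omega)
    ring_nf at *
    omega
end

section
/- For all natural numbers n ≥ 0, the factor complexity of the Thue–Morse sequence satisfies f_t(16n+7) = 2·f_t(8n+4) and f_t(16n+11) = 2·f_t(8n+6). -/
/-! ### Auxiliary development -/

lemma tm_lt_two (n : ℕ) : tm n < 2 := Nat.mod_lt _ (by norm_num)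

lemma tm_even (k : ℕ) : tm (2 * k) = tm k := by
  rcases Nat.eq_zero_or_pos k with h | h
  · simp [h]
  · unfold tm
    rw [Nat.digits_def' (by norm_num : 1 < 2) (by omega)]
    have h1 : (2 * k) % 2 = 0 := by omega
    have h2 : (2 * k) / 2 = k := by omega
    rw [h1, h2, List.sum_cons, Nat.zero_add]

lemma tm_odd (k : ℕ) : tm (2 * k + 1) = (tm k + 1) % 2 := by
  unfold tm
  rw [Nat.digits_def' (by norm_num : 1 < 2) (by omega)]
  have h1 : (2 * k + 1) % 2 = 1 := by omega
  have h2 : (2 * k + 1) / 2 = k := by omega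
  rw [h1, h2, List.sum_cons]
  omega

lemma tm_block (k : ℕ) : tm (2 * k) ≠ tm (2 * k + 1) := by
  rw [tm_even, tm_odd]
  have := tm_lt_two k
  omega

lemma no_alt (a : ℕ) (h1 : tm (2 * a + 1) ≠ tm (2 * a + 2))
    (h3 : tm (2 * a + 3) ≠ tm (2 * a + 4)) : False := by
  rw [tm_odd, show 2 * a + 2 = 2 * (a + 1) from by ring, tm_even] at h1
  rw [show 2 * a + 3 = 2 * (a + 1) + 1 from by ring, tm_odd,
    show 2 * a + 4 = 2 * (a + 2) from by ring, tm_even] at h3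
  have la := tm_lt_two a
  have la1 := tm_lt_two (a + 1)
  have la2 := tm_lt_two (a + 2)
  have e1 : tm a = tm (a + 1) := by omega
  have e2 : tm (a + 1) = tm (a + 2) := by omega
  obtain ⟨c, rfl | rfl⟩ := Nat.even_or_odd' a
  · exact tm_block c e1
  · have := tm_block (c + 1)
    rw [show 2 * (c + 1) + 1 = 2 * c + 1 + 2 from by ring,
      show 2 * (c + 1) = 2 * c + 1 + 1 from by ring] at this
    exact this e2

lemma phase {i i' : ℕ} (hi : i % 2 = 0) (hi' : i' % 2 = 1)
    (h : ∀ j, j < 5 → tm (i + j) = tm (i' + j)) : False := by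
  obtain ⟨a, rfl⟩ : ∃ a, i = 2 * a := ⟨i / 2, by omega⟩
  obtain ⟨b, rfl⟩ : ∃ b, i' = 2 * b + 1 := ⟨i' / 2, by omega⟩
  apply no_alt a
  · rw [h 1 (by norm_num), h 2 (by norm_num)]
    have := tm_block (b + 1)
    rw [show 2 * (b + 1) + 1 = 2 * b + 1 + 2 from by ring,
      show 2 * (b + 1) = 2 * b + 1 + 1 from by ring] at this
    exact this
  · rw [h 3 (by norm_num), h 4 (by norm_num)]
    have := tm_block (b + 2)
    rw [show 2 * (b + 2) + 1 = 2 * b + 1 + 4 from by ring,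
      show 2 * (b + 2) = 2 * b + 1 + 3 from by ring] at this
    exact this

/-- The set of factors of length `n` of the Thue–Morse sequence. -/
def Fset (n : ℕ) : Set (Fin n → ℕ) := {w | ∃ i : ℕ, ∀ j : Fin n, w j = tm (i + j)}

lemma tmComplexity_eq (n : ℕ) : tmComplexity n = (Fset n).ncard := rfl

lemma Fset_finite (n : ℕ) : (Fset n).Finite := by
  apply Set.Finite.subset (Set.Finite.pi (fun _ : Fin n => Set.finite_Iio 2))
  rintro w ⟨i, hw⟩
  intro j _
  have : w j = tm (i + j) := hw j
  simp only [Set.mem_Iio, this]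
  exact tm_lt_two _

/-- Prefix of length `2m+1` of the image under the Thue–Morse morphism. -/
def Emap (m : ℕ) (v : Fin (m + 1) → ℕ) (j : Fin (2 * m + 1)) : ℕ :=
  if (j : ℕ) % 2 = 0 then v ⟨(j : ℕ) / 2, by have := j.2; omega⟩
  else (v ⟨(j : ℕ) / 2, by have := j.2; omega⟩ + 1) % 2

/-- Suffix of length `2m+1` of the image under the Thue–Morse morphism. -/
def Omap (m : ℕ) (v : Fin (m + 1) → ℕ) (j : Fin (2 * m + 1)) : ℕ :=
  if (j : ℕ) % 2 = 0 then (v ⟨(j : ℕ) / 2, by have := j.2; omega⟩ + 1) % 2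
  else v ⟨((j : ℕ) + 1) / 2, by have := j.2; omega⟩

lemma Emap_occ (m i : ℕ) (v : Fin (m + 1) → ℕ)
    (hv : ∀ j : Fin (m + 1), v j = tm (i + j)) :
    ∀ j : Fin (2 * m + 1), Emap m v j = tm (2 * i + j) := by
  intro j
  unfold Emap
  rcases Nat.even_or_odd (j : ℕ) with hpar | hpar
  · have hj : (j : ℕ) % 2 = 0 := Nat.even_iff.mp hpar
    rw [if_pos hj, hv ⟨(j : ℕ) / 2, by have := j.2; omega⟩]
    have e : 2 * i + (j : ℕ) = 2 * (i + (j : ℕ) / 2) := by omega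
    rw [e, tm_even]
  · have hj : ¬ ((j : ℕ) % 2 = 0) := by have := Nat.odd_iff.mp hpar; omega
    rw [if_neg hj, hv ⟨(j : ℕ) / 2, by have := j.2; omega⟩]
    have e : 2 * i + (j : ℕ) = 2 * (i + (j : ℕ) / 2) + 1 := by
      have := Nat.odd_iff.mp hpar; omega
    rw [e, tm_odd]

lemma Omap_occ (m i : ℕ) (v : Fin (m + 1) → ℕ)
    (hv : ∀ j : Fin (m + 1), v j = tm (i + j)) :
    ∀ j : Fin (2 * m + 1), Omap m v j = tm (2 * i + 1 + j) := by
  intro j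
  unfold Omap
  rcases Nat.even_or_odd (j : ℕ) with hpar | hpar
  · have hj : (j : ℕ) % 2 = 0 := Nat.even_iff.mp hpar
    rw [if_pos hj, hv ⟨(j : ℕ) / 2, by have := j.2; omega⟩]
    have e : 2 * i + 1 + (j : ℕ) = 2 * (i + (j : ℕ) / 2) + 1 := by omega
    rw [e, tm_odd]
  · have hj : ¬ ((j : ℕ) % 2 = 0) := by have := Nat.odd_iff.mp hpar; omega
    rw [if_neg hj, hv ⟨((j : ℕ) + 1) / 2, by have := j.2; omega⟩]
    have e : 2 * i + 1 + (j : ℕ) = 2 * (i + ((j : ℕ) + 1) / 2) := by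
      have := Nat.odd_iff.mp hpar; omega
    rw [e, tm_even]

lemma main_rec (m : ℕ) (hm : 2 ≤ m) :
    (Fset (2 * m + 1)).ncard = 2 * (Fset (m + 1)).ncard := by
  -- covering
  have hcover : Fset (2 * m + 1) = Emap m '' Fset (m + 1) ∪ Omap m '' Fset (m + 1) := by
    ext w
    constructor
    · rintro ⟨i, hw⟩
      obtain ⟨k, rfl | rfl⟩ := Nat.even_or_odd' i
      · left
        refine ⟨fun r => tm (k + r), ⟨k, fun r => rfl⟩, ?_⟩
        funext j
        rw [Emap_occ m k _ (fun r => rfl) j, ← hw j]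
      · right
        refine ⟨fun r => tm (k + r), ⟨k, fun r => rfl⟩, ?_⟩
        funext j
        rw [Omap_occ m k _ (fun r => rfl) j, ← hw j]
    · rintro (⟨v, ⟨i, hv⟩, rfl⟩ | ⟨v, ⟨i, hv⟩, rfl⟩)
      · exact ⟨2 * i, Emap_occ m i v hv⟩
      · exact ⟨2 * i + 1, Omap_occ m i v hv⟩
  -- injectivity of Emap
  have hEinj : Set.InjOn (Emap m) (Fset (m + 1)) := by
    rintro v ⟨i, hv⟩ v' ⟨i', hv'⟩ h
    funext r
    have hr : 2 * (r : ℕ) < 2 * m + 1 := by have := r.2; omega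
    have key : tm (2 * i + 2 * (r : ℕ)) = tm (2 * i' + 2 * (r : ℕ)) := by
      calc tm (2 * i + 2 * (r : ℕ)) = Emap m v ⟨2 * (r : ℕ), hr⟩ :=
            (Emap_occ m i v hv ⟨2 * (r : ℕ), hr⟩).symm
        _ = Emap m v' ⟨2 * (r : ℕ), hr⟩ := by rw [h]
        _ = tm (2 * i' + 2 * (r : ℕ)) := Emap_occ m i' v' hv' ⟨2 * (r : ℕ), hr⟩
    rw [show 2 * i + 2 * (r : ℕ) = 2 * (i + (r : ℕ)) from by ring,
      show 2 * i' + 2 * (r : ℕ) = 2 * (i' + (r : ℕ)) from by ring,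
      tm_even, tm_even] at key
    rw [hv r, hv' r]
    exact key
  -- injectivity of Omap
  have hOinj : Set.InjOn (Omap m) (Fset (m + 1)) := by
    rintro v ⟨i, hv⟩ v' ⟨i', hv'⟩ h
    have key : ∀ j, j < 2 * m + 1 → tm (2 * i + 1 + j) = tm (2 * i' + 1 + j) := by
      intro j hj
      calc tm (2 * i + 1 + j) = Omap m v ⟨j, hj⟩ := (Omap_occ m i v hv ⟨j, hj⟩).symm
        _ = Omap m v' ⟨j, hj⟩ := by rw [h]
        _ = tm (2 * i' + 1 + j) := Omap_occ m i' v' hv' ⟨j, hj⟩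
    funext r
    rw [hv r, hv' r]
    rcases Nat.eq_zero_or_pos (r : ℕ) with h0 | h0
    · rw [h0]
      have k0 : tm (2 * i + 1) = tm (2 * i' + 1) := key 0 (by omega)
      rw [tm_odd, tm_odd] at k0
      have := tm_lt_two i
      have := tm_lt_two i'
      simp only [Nat.add_zero]
      omega
    · obtain ⟨s, hs⟩ : ∃ s, (r : ℕ) = s + 1 := ⟨(r : ℕ) - 1, by omega⟩
      have hj : 2 * s + 1 < 2 * m + 1 := by have := r.2; omega
      have k := key (2 * s + 1) hj
      rw [show 2 * i + 1 + (2 * s + 1) = 2 * (i + (s + 1)) from by ring,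
        show 2 * i' + 1 + (2 * s + 1) = 2 * (i' + (s + 1)) from by ring,
        tm_even, tm_even] at k
      rw [hs]
      exact k
  -- disjointness
  have hdisj : Disjoint (Emap m '' Fset (m + 1)) (Omap m '' Fset (m + 1)) := by
    rw [Set.disjoint_left]
    rintro w ⟨v, ⟨i, hv⟩, hEw⟩ ⟨v', ⟨i', hv'⟩, hOw⟩
    have key : ∀ j, j < 5 → tm (2 * i + j) = tm (2 * i' + 1 + j) := by
      intro j hj
      have hj' : j < 2 * m + 1 := by omega
      calc tm (2 * i + j) = Emap m v ⟨j, hj'⟩ := (Emap_occ m i v hv ⟨j, hj'⟩).symm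
        _ = w ⟨j, hj'⟩ := by rw [hEw]
        _ = Omap m v' ⟨j, hj'⟩ := by rw [hOw]
        _ = tm (2 * i' + 1 + j) := Omap_occ m i' v' hv' ⟨j, hj'⟩
    exact phase (by omega) (by omega) key
  rw [hcover,
    Set.ncard_union_eq hdisj ((Fset_finite _).image _) ((Fset_finite _).image _),
    Set.ncard_image_of_injOn hEinj, Set.ncard_image_of_injOn hOinj]
  ring

theorem stmt_18 (n : ℕ) :
    tmComplexity (16 * n + 7) = 2 * tmComplexity (8 * n + 4) ∧
    tmComplexity (16 * n + 11) = 2 * tmComplexity (8 * n + 6) := by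
  constructor
  · rw [tmComplexity_eq, tmComplexity_eq,
      show 16 * n + 7 = 2 * (8 * n + 3) + 1 from by ring,
      show 8 * n + 4 = (8 * n + 3) + 1 from by ring]
    exact main_rec (8 * n + 3) (by omega)
  · rw [tmComplexity_eq, tmComplexity_eq,
      show 16 * n + 11 = 2 * (8 * n + 5) + 1 from by ring,
      show 8 * n + 6 = (8 * n + 5) + 1 from by ring]
    exact main_rec (8 * n + 5) (by omega)
end
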